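/- arXiv:2205.11295 — 3 statements merged into one kernel-verified Lean document; each statement's English description precedes it below -/
import Mathlib

section
/- There exists no ε ∈ (0, 1/4] satisfying simultaneously t(1/4 − ε²) > t/8, t(3/4 − ε) > 9t/16, and ε + ε² > 1/4, for t > 0. -/
/-! Firm B gains only when `ε < 3/16`, and then `ε + ε² < 3/16 + (3/16)² = 57/256 < 1/4`. -/

lemma lt_three_sixteenths_of_mul_gt {t ε : ℝ} (ht : 0 < t) (h : t * (3/4 - ε) > 9 * t / 16) :
    ε < 3/16 := by
  have : t * (3/16 - ε) > 0 := by linarith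
  linarith [(pos_iff_pos_of_mul_pos this).mp ht]

lemma add_sq_lt_quarter {ε : ℝ} (h0 : 0 ≤ ε) (h : ε < 3/16) : ε + ε^2 < 1/4 := by
  nlinarith

/-- No `ε ∈ (0, 1/4]` simultaneously makes both firms strictly better off and strictly
increases consumer welfare. -/
theorem stmt_10 (t : ℝ) (ht : 0 < t) :
    ¬ ∃ ε ∈ Set.Ioc (0:ℝ) (1/4),
      t*(1/4 - ε^2) > t/8 ∧ t*(3/4 - ε) > 9*t/16 ∧ ε + ε^2 > 1/4 := by
  rintro ⟨ε, ⟨hε0, -⟩, -, hB, hW⟩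
  exact (add_sq_lt_quarter hε0.le (lt_three_sixteenths_of_mul_gt ht hB)).not_gt hW
end

section
/- Let t > 0 and p_B ≥ 0. Among the three maximizations: max over p ∈ [0, t/3) of p[(1/2 − p/(2t) − 1/6) + (1/2 − (p − p_B)/(2t))], max over p ∈ [t/3, 2t/3) of p[1/6 + (1/2 − (p − p_B)/(2t))], and max over p ∈ [2t/3, ∞) of p[(1/2 − p/(2t)) + (1/2 − (p − p_B)/(2t))], if p_B = 2t/3 then the overall maximum is attained at p = 2t/3. -/
/-!
With `p_B = 2t/3` the three branches of A's profit are `p (7/6 - p/t)`, `p (1 - p/(2t))` and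
`p (4/3 - p/t)`, and the profit at `p = 2t/3` is `4t/9`. The third parabola peaks exactly at
`2t/3`; the second is still increasing up to `2t/3`; and the first, even ignoring its domain,
never reaches `4t/9`, since `p² - 7tp/6 + 4t²/9` has negative discriminant.
-/

section Profit

variable {t : ℝ} (p : ℝ)

theorem undercut_profit_lt (ht : 0 < t) : p * (7/6 - p/t) < 4*t/9 := by
  have key : 4*t/9 - p * (7/6 - p/t) = ((p - 7*t/12)^2 + 5*t^2/48) / t := by
    field_simp
    ring
  have : 0 < ((p - 7*t/12)^2 + 5*t^2/48) / t := by positivity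
  linarith

theorem captive_profit_le (ht : 0 < t) (hp : p ≤ 2*t/3) : p * (1 - p/(2*t)) ≤ 4*t/9 := by
  have key : 4*t/9 - p * (1 - p/(2*t)) = (2*t/3 - p) * (4*t/3 - p) / (2*t) := by
    field_simp
    ring
  have : 0 ≤ (2*t/3 - p) * (4*t/3 - p) / (2*t) := by
    apply div_nonneg _ (by positivity)
    nlinarith
  linarith

theorem high_profit_le (ht : 0 < t) : p * (4/3 - p/t) ≤ 4*t/9 := by
  have key : 4*t/9 - p * (4/3 - p/t) = (p - 2*t/3)^2 / t := by
    field_simp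
    ring
  have : 0 ≤ (p - 2*t/3)^2 / t := by positivity
  linarith

end Profit

/-- Firm A's uniform-price best response under the firm-optimal mechanism: with
`p_B = 2t/3`, the overall maximum of the piecewise profit function is attained at
`p = 2t/3`. -/
theorem stmt_18 (t pB : ℝ) (ht : 0 < t) (hpB : pB = 2*t/3) :
    IsMaxOn (fun p : ℝ =>
        if p < t/3 then p * ((1/2 - p/(2*t) - 1/6) + (1/2 - (p - pB)/(2*t)))
        else if p < 2*t/3 then p * (1/6 + (1/2 - (p - pB)/(2*t)))
        else p * ((1/2 - p/(2*t)) + (1/2 - (p - pB)/(2*t))))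
      (Set.Ici (0:ℝ)) (2*t/3) := by
  subst hpB
  rw [isMaxOn_iff]
  intro p _
  have h_not_undercut : ¬ (2*t/3 < t/3) := by linarith
  have h_value : 2*t/3 * ((1/2 - 2*t/3/(2*t)) + (1/2 - (2*t/3 - 2*t/3)/(2*t))) = 4*t/9 := by
    field_simp
    ring
  simp only [h_not_undercut, lt_irrefl, if_false, h_value]
  split_ifs with _ h_captive
  · calc _ = p * (7/6 - p/t) := by field_simp; ring
      _ ≤ 4*t/9 := (undercut_profit_lt p ht).le
  · calc _ = p * (1 - p/(2*t)) := by field_simp; ring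
      _ ≤ 4*t/9 := captive_profit_le p ht h_captive.le
  · calc _ = p * (4/3 - p/t) := by field_simp; ring
      _ ≤ 4*t/9 := high_profit_le p ht
end

section
/- Suppose consumers are uniform within each segment with segment probabilities q_B, q_A, q_∅, q_{AB} summing to 1, with q_A, q_B > 0. Let p_A = t(2q_Bq_A + 2q_Bq_∅ + 3q_Aq_∅ + 3q_∅²)/(4q_Bq_A + 4q_Bq_∅ + 4q_Aq_∅ + 3q_∅²) and p_B defined symmetrically (swapping q_A and q_B). Then 3q_B·p_A² ≥ q_A·p_B² holds for every q_∅ ≥ 0 if and only if 3q_B ≥ q_A. -/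
/-!
With no uninformed consumers (`q_∅ = 0`) both prices equal `t / 2`, so the inequality reads
`3 q_B ≥ q_A`. Conversely, after clearing the common factor `(t / D)²`, the gap
`3 q_B N_A² - q_A N_B²` is a quartic in `q_∅` whose coefficients are all nonnegative once
`3 q_B ≥ q_A`.
-/

noncomputable def priceA (t qA qB qe : ℝ) : ℝ :=
  t * (2*qB*qA + 2*qB*qe + 3*qA*qe + 3*qe^2) / (4*qB*qA + 4*qB*qe + 4*qA*qe + 3*qe^2)

noncomputable def priceB (t qA qB qe : ℝ) : ℝ :=
  t * (2*qB*qA + 2*qA*qe + 3*qB*qe + 3*qe^2) / (4*qB*qA + 4*qB*qe + 4*qA*qe + 3*qe^2)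

theorem priceA_zero (t : ℝ) {qA qB : ℝ} (hqA : qA ≠ 0) (hqB : qB ≠ 0) :
    priceA t qA qB 0 = t / 2 := by
  unfold priceA
  field_simp
  ring

theorem priceB_zero (t : ℝ) {qA qB : ℝ} (hqA : qA ≠ 0) (hqB : qB ≠ 0) :
    priceB t qA qB 0 = t / 2 := by
  unfold priceB
  field_simp
  ring

theorem ir_gap_eq (qA qB qe : ℝ) :
    3*qB*(2*qB*qA + 2*qB*qe + 3*qA*qe + 3*qe^2)^2
        - qA*(2*qB*qA + 2*qA*qe + 3*qB*qe + 3*qe^2)^2 =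
      4*qA^2*qB^2*(3*qB - qA) + 8*qA*qB*(3*qB^2 + 3*qA*qB - qA^2)*qe
        + (12*qB^3 + 63*qA*qB^2 + 3*qA^2*qB - 4*qA^3)*qe^2
        + 12*(3*qB^2 + 3*qA*qB - qA^2)*qe^3 + 9*(3*qB - qA)*qe^4 := by
  ring

theorem ir_numerator_le {qA qB qe : ℝ} (hqA : 0 ≤ qA) (hqB : 0 ≤ qB) (hqe : 0 ≤ qe)
    (h : qA ≤ 3*qB) :
    qA*(2*qB*qA + 2*qA*qe + 3*qB*qe + 3*qe^2)^2 ≤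
      3*qB*(2*qB*qA + 2*qB*qe + 3*qA*qe + 3*qe^2)^2 := by
  have c0 : 0 ≤ 3*qB - qA := by linarith
  have c1 : 0 ≤ 3*qB^2 + 3*qA*qB - qA^2 := by nlinarith [mul_nonneg hqA hqB]
  have c2 : 0 ≤ 12*qB^3 + 63*qA*qB^2 + 3*qA^2*qB - 4*qA^3 := by
    nlinarith [mul_nonneg (mul_nonneg hqA hqA) c0, mul_nonneg (mul_nonneg hqA hqB) hqB,
      pow_nonneg hqB 3]
  have gap_nonneg : 0 ≤ 3*qB*(2*qB*qA + 2*qB*qe + 3*qA*qe + 3*qe^2)^2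
      - qA*(2*qB*qA + 2*qA*qe + 3*qB*qe + 3*qe^2)^2 := by
    rw [ir_gap_eq]
    positivity
  linarith

theorem mul_sq_mul_div_le {a b x y : ℝ} (h : a * x^2 ≤ b * y^2) (t D : ℝ) :
    a * (t * x / D)^2 ≤ b * (t * y / D)^2 := by
  have hx : (t * x / D)^2 = x^2 * (t / D)^2 := by ring
  have hy : (t * y / D)^2 = y^2 * (t / D)^2 := by ring
  rw [hx, hy, ← mul_assoc, ← mul_assoc]
  exact mul_le_mul_of_nonneg_right h (sq_nonneg _)

/-- In the general four-segment model with uniform within-segment distributions and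
segment probabilities summing to 1, the IR inequality `3 q_B p_A² ≥ q_A p_B²` holds for
every `q_∅ ≥ 0` iff `3 q_B ≥ q_A`. -/
theorem stmt_19 (t qA qB : ℝ) (ht : 0 < t) (hqA : 0 < qA) (hqB : 0 < qB)
    (hsum : qA + qB ≤ 1) :
    (∀ qe qAB : ℝ, 0 ≤ qe → 0 ≤ qAB → qB + qA + qe + qAB = 1 →
        3 * qB * (t*(2*qB*qA + 2*qB*qe + 3*qA*qe + 3*qe^2) /
            (4*qB*qA + 4*qB*qe + 4*qA*qe + 3*qe^2))^2 ≥
          qA * (t*(2*qB*qA + 2*qA*qe + 3*qB*qe + 3*qe^2) /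
            (4*qB*qA + 4*qB*qe + 4*qA*qe + 3*qe^2))^2) ↔
      3*qB ≥ qA := by
  show (∀ qe qAB : ℝ, 0 ≤ qe → 0 ≤ qAB → qB + qA + qe + qAB = 1 →
      3 * qB * priceA t qA qB qe ^ 2 ≥ qA * priceB t qA qB qe ^ 2) ↔ 3*qB ≥ qA
  constructor
  · intro h
    have h0 := h 0 (1 - qB - qA) le_rfl (by linarith) (by ring)
    rw [priceA_zero t hqA.ne' hqB.ne', priceB_zero t hqA.ne' hqB.ne'] at h0
    exact le_of_mul_le_mul_right h0 (by positivity)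
  · intro h qe _ hqe _ _
    exact mul_sq_mul_div_le (ir_numerator_le hqA.le hqB.le hqe h) t _
end
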